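/- arXiv:2501.13534 — 5 statements merged into one kernel-verified Lean document; each statement's English description precedes it below -/
import Mathlib

section
/- Let C_S be a set code of length n over Σ_q correcting t deletions and let C_UD ⊆ S_n be a permutation code of length n correcting t unstable deletions. Then C_1 = Φ^{-1}(C_S × C_UD) ⊆ M_q^n is a code correcting t deletions, and |C_1| = |C_S| · |C_UD|. -/
/-- The induced permutation of a tuple `x` with pairwise distinct entries:
`inducedPerm x i` is the (0-indexed) rank of `x i` among the entries of `x`,
i.e. the inverse of the sorting permutation. -/
def inducedPerm {n : ℕ} {α : Type*} [LinearOrder α] (x : Fin n → α) : Equiv.Perm (Fin n) :=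
  (Tuple.sort x)⁻¹

/-- `IsSubseq y x` : the sequence `y` is obtained from `x` by deleting some entries,
keeping the relative order of the remaining entries. -/
def IsSubseq {α : Type*} {m n : ℕ} (y : Fin m → α) (x : Fin n → α) : Prop :=
  ∃ g : Fin m → Fin n, StrictMono g ∧ ∀ j, y j = x (g j)

/-- The induced set `A(x)` of a tuple. -/
def inducedSet {q n : ℕ} (x : Fin n → Fin q) : Finset (Fin q) :=
  Finset.image x Finset.univ

/-- The map `Φ : x ↦ (A(x), P(x))`. -/
def Phi {q n : ℕ} (x : Fin n → Fin q) : Finset (Fin q) × Equiv.Perm (Fin n) :=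
  (inducedSet x, inducedPerm x)

/-- A code `C ⊆ Σ_q^n` corrects `t` deletions if no sequence of length `n - t`
is a common subsequence of two distinct codewords. -/
def CorrectsDeletions (q n t : ℕ) (C : Set (Fin n → Fin q)) : Prop :=
  ∀ x ∈ C, ∀ x' ∈ C, ∀ y : Fin (n - t) → Fin q, IsSubseq y x → IsSubseq y x' → x = x'

/-- A set code (family of `n`-subsets of `Σ_q`) corrects `t` deletions if no
`(n - t)`-element subset is contained in two distinct codewords. -/
def SetCodeCorrects (q n t : ℕ) (CS : Set (Finset (Fin q))) : Prop :=
  ∀ A ∈ CS, ∀ B ∈ CS, ∀ D : Finset (Fin q), D.card = n - t → D ⊆ A → D ⊆ B → A = B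

/-- A permutation code corrects `t` stable deletions if, identifying each permutation
with its word, no word of length `n - t` is a common subsequence of two distinct codewords. -/
def PermCodeCorrectsStable (n t : ℕ) (C : Set (Equiv.Perm (Fin n))) : Prop :=
  ∀ σ ∈ C, ∀ σ' ∈ C, ∀ u : Fin (n - t) → Fin n,
    IsSubseq u ⇑σ → IsSubseq u ⇑σ' → σ = σ'

/-- A permutation code corrects `t` unstable deletions if there are no two distinct
codewords `σ, σ'` with subsequences `u` of `σ` and `u'` of `σ'`, both of length `n - t`,
having the same induced permutation. -/
def PermCodeCorrectsUnstable (n t : ℕ) (C : Set (Equiv.Perm (Fin n))) : Prop :=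
  ∀ σ ∈ C, ∀ σ' ∈ C, ∀ u u' : Fin (n - t) → Fin n,
    IsSubseq u ⇑σ → IsSubseq u' ⇑σ' → inducedPerm u = inducedPerm u' → σ = σ'

/-!
Write a multiplicity-free `x` as `x = e ∘ P(x)`, where `e` is the increasing enumeration of
`A(x)`; so `Φ` is a bijection onto pairs `(A, σ)` with `|A| = n`, which gives the cardinality.
A common subsequence `y` of two codewords `x, x'` has `A(y) ⊆ A(x) ∩ A(x')` with `|A(y)| = n - t`,
so `A(x) = A(x')`. Moreover, deleting from `P(x)` the positions deleted from `x` leaves a word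
whose induced permutation is `P(y)`, because `e` is strictly monotone; the same holds for `x'`,
hence `P(x) = P(x')`.
-/

open Function

section InducedPerm

variable {n m : ℕ} {α β : Type*} [LinearOrder α] [LinearOrder β]

theorem Tuple.sort_strictMono_comp {f : α → β} (hf : StrictMono f) (x : Fin n → α) :
    Tuple.sort (f ∘ x) = Tuple.sort x := by
  obtain ⟨hmono, hties⟩ := Tuple.eq_sort_iff.mp (rfl : Tuple.sort x = Tuple.sort x)
  exact (Tuple.eq_sort_iff.mpr
    ⟨hf.monotone.comp hmono, fun i j hij h => hties i j hij (hf.injective h)⟩).symm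

theorem inducedPerm_strictMono_comp {f : α → β} (hf : StrictMono f) (x : Fin n → α) :
    inducedPerm (f ∘ x) = inducedPerm x := by
  rw [inducedPerm, inducedPerm, Tuple.sort_strictMono_comp hf]

theorem inducedPerm_perm (σ : Equiv.Perm (Fin n)) : inducedPerm ⇑σ = σ := by
  rw [inducedPerm, Tuple.sort_perm, inv_inv]

theorem comp_sort_comp_inducedPerm (x : Fin n → α) : (x ∘ Tuple.sort x) ∘ inducedPerm x = x := by
  ext i
  simp [inducedPerm]

theorem strictMono_comp_sort {x : Fin n → α} (hx : Injective x) :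
    StrictMono (x ∘ Tuple.sort x) :=
  (Tuple.monotone_sort x).strictMono_of_injective (hx.comp (Equiv.injective _))

theorem inducedPerm_inducedPerm_comp {x : Fin n → α} (hx : Injective x) (g : Fin m → Fin n) :
    inducedPerm (inducedPerm x ∘ g) = inducedPerm (x ∘ g) := by
  conv_rhs => rw [← comp_sort_comp_inducedPerm x, comp_assoc]
  exact (inducedPerm_strictMono_comp (strictMono_comp_sort hx) _).symm

end InducedPerm

namespace IsSubseq

variable {α : Type*} {m n : ℕ} {y : Fin m → α} {x : Fin n → α}

theorem injective (h : IsSubseq y x) (hx : Injective x) : Injective y := by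
  obtain ⟨g, hg, hyg⟩ := h
  intro j k hjk
  exact hg.injective (hx (by rw [← hyg, ← hyg, hjk]))

theorem inducedSet_subset {q : ℕ} {y : Fin m → Fin q} {x : Fin n → Fin q} (h : IsSubseq y x) :
    inducedSet y ⊆ inducedSet x := by
  obtain ⟨g, -, hyg⟩ := h
  intro a ha
  obtain ⟨j, -, rfl⟩ := Finset.mem_image.mp ha
  exact Finset.mem_image.mpr ⟨g j, Finset.mem_univ _, (hyg j).symm⟩

theorem exists_inducedPerm_eq [LinearOrder α] (h : IsSubseq y x) (hx : Injective x) :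
    ∃ u : Fin m → Fin n, IsSubseq u ⇑(inducedPerm x) ∧ inducedPerm u = inducedPerm y := by
  obtain ⟨g, hg, hyg⟩ := h
  obtain rfl : y = x ∘ g := funext hyg
  exact ⟨inducedPerm x ∘ g, ⟨g, hg, fun _ => rfl⟩, inducedPerm_inducedPerm_comp hx g⟩

end IsSubseq

section Phi

variable {q n : ℕ}

theorem card_inducedSet {x : Fin n → Fin q} (hx : Injective x) : (inducedSet x).card = n := by
  rw [inducedSet, Finset.card_image_of_injective _ hx, Finset.card_univ, Fintype.card_fin]

theorem comp_sort_eq_orderEmbOfFin {x : Fin n → Fin q} (hx : Injective x) {A : Finset (Fin q)}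
    (hA : A.card = n) (hxA : inducedSet x = A) : x ∘ Tuple.sort x = A.orderEmbOfFin hA := by
  subst hxA
  exact Finset.orderEmbOfFin_unique hA
    (fun i => Finset.mem_image_of_mem x (Finset.mem_univ _)) (strictMono_comp_sort hx)

theorem Phi_injOn : Set.InjOn Phi {x : Fin n → Fin q | Injective x} := by
  intro x hx x' hx' hxx'
  have hA : inducedSet x = inducedSet x' := congrArg Prod.fst hxx'
  have hP : inducedPerm x = inducedPerm x' := congrArg Prod.snd hxx'
  have hsorted : x ∘ Tuple.sort x = x' ∘ Tuple.sort x' := by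
    rw [comp_sort_eq_orderEmbOfFin hx (card_inducedSet hx) rfl,
      comp_sort_eq_orderEmbOfFin hx' (card_inducedSet hx) hA.symm]
  calc x = (x ∘ Tuple.sort x) ∘ inducedPerm x := (comp_sort_comp_inducedPerm x).symm
    _ = (x' ∘ Tuple.sort x') ∘ inducedPerm x' := by rw [hsorted, hP]
    _ = x' := comp_sort_comp_inducedPerm x'

theorem Phi_orderEmbOfFin_comp {A : Finset (Fin q)} (hA : A.card = n) (σ : Equiv.Perm (Fin n)) :
    Phi (A.orderEmbOfFin hA ∘ σ) = (A, σ) := by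
  refine Prod.ext ?_ ?_
  · rw [Phi, inducedSet, ← Finset.image_image, Finset.image_univ_equiv,
      Finset.image_orderEmbOfFin_univ]
  · rw [Phi, inducedPerm_strictMono_comp (A.orderEmbOfFin hA).strictMono, inducedPerm_perm]

theorem Phi_bijOn {S : Set (Finset (Fin q) × Equiv.Perm (Fin n))} (hS : ∀ p ∈ S, p.1.card = n) :
    Set.BijOn Phi ({x | Injective x} ∩ Phi ⁻¹' S) S := by
  refine ⟨fun x hx => hx.2, Phi_injOn.mono Set.inter_subset_left, ?_⟩
  rintro ⟨A, σ⟩ hAσ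
  have hx := Phi_orderEmbOfFin_comp (hS _ hAσ) σ
  exact ⟨_, ⟨(A.orderEmbOfFin _).injective.comp σ.injective, by rwa [Set.mem_preimage, hx]⟩, hx⟩

end Phi

theorem correctsDeletions_inter_preimage_Phi {q n t : ℕ} {CS : Set (Finset (Fin q))}
    {CUD : Set (Equiv.Perm (Fin n))} (hCS : SetCodeCorrects q n t CS)
    (hCUD : PermCodeCorrectsUnstable n t CUD) :
    CorrectsDeletions q n t ({x | Injective x} ∩ Phi ⁻¹' (CS ×ˢ CUD)) := by
  rintro x ⟨hx, hxA, hxP⟩ x' ⟨hx', hxA', hxP'⟩ y hyx hyx'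
  have hA : inducedSet x = inducedSet x' :=
    hCS _ hxA _ hxA' _ (card_inducedSet (hyx.injective hx)) hyx.inducedSet_subset
      hyx'.inducedSet_subset
  obtain ⟨u, hu, hPu⟩ := hyx.exists_inducedPerm_eq hx
  obtain ⟨u', hu', hPu'⟩ := hyx'.exists_inducedPerm_eq hx'
  have hP : inducedPerm x = inducedPerm x' := hCUD _ hxP _ hxP' u u' hu hu' (hPu.trans hPu'.symm)
  exact Phi_injOn hx hx' (Prod.ext hA hP)

theorem card_inter_preimage_Phi {q n : ℕ} {CS : Set (Finset (Fin q))}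
    (hCSn : ∀ A ∈ CS, A.card = n) (CUD : Set (Equiv.Perm (Fin n))) :
    Nat.card ({x : Fin n → Fin q | Injective x} ∩ Phi ⁻¹' (CS ×ˢ CUD) : Set (Fin n → Fin q)) =
      Nat.card CS * Nat.card CUD := by
  rw [Nat.card_congr ((Phi_bijOn fun p hp => hCSn _ hp.1).equiv _),
    Nat.card_congr (Equiv.Set.prod CS CUD), Nat.card_prod]

theorem stmt_3_general (q n t : ℕ)
    (CS : Set (Finset (Fin q))) (hCSn : ∀ A ∈ CS, A.card = n)
    (hCS : SetCodeCorrects q n t CS)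
    (CUD : Set (Equiv.Perm (Fin n))) (hCUD : PermCodeCorrectsUnstable n t CUD) :
    CorrectsDeletions q n t
        ({x : Fin n → Fin q | Function.Injective x} ∩ Phi ⁻¹' (CS ×ˢ CUD)) ∧
    Nat.card ({x : Fin n → Fin q | Function.Injective x} ∩ Phi ⁻¹' (CS ×ˢ CUD) :
        Set (Fin n → Fin q)) = Nat.card CS * Nat.card CUD :=
  ⟨correctsDeletions_inter_preimage_Phi hCS hCUD, card_inter_preimage_Phi hCSn CUD⟩

/-- If C_S is a set code of length n over Σ_q correcting t deletions, and
C_UD ⊆ S_n is a permutation code correcting t unstable deletions, then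
C_1 = Φ⁻¹(C_S × C_UD) ⊆ M_q^n corrects t deletions and |C_1| = |C_S| · |C_UD|. -/
theorem stmt_3 (q n t : ℕ) (ht : 0 < t) (htn : t < n) (hnq : n ≤ q)
    (CS : Set (Finset (Fin q))) (hCSn : ∀ A ∈ CS, A.card = n)
    (hCS : SetCodeCorrects q n t CS)
    (CUD : Set (Equiv.Perm (Fin n))) (hCUD : PermCodeCorrectsUnstable n t CUD) :
    CorrectsDeletions q n t
        ({x : Fin n → Fin q | Function.Injective x} ∩ Phi ⁻¹' (CS ×ˢ CUD)) ∧
    Nat.card ({x : Fin n → Fin q | Function.Injective x} ∩ Phi ⁻¹' (CS ×ˢ CUD) :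
        Set (Fin n → Fin q)) = Nat.card CS * Nat.card CUD :=
  stmt_3_general q n t CS hCSn hCS CUD hCUD
end

section
/- Let x ∈ M_q^n and let y be a subsequence of x of length n − t. Then there exists a sequence u of length n − t with pairwise distinct entries in [n] such that u is a subsequence of the word (P(x)(1),…,P(x)(n)) and P(u) = P(y); that is, the induced permutation P(y) can be obtained from P(x) by t unstable deletions. -/
/-- If x ∈ M_q^n and y is a subsequence of x of length n − t, then there
is a sequence u of length n − t with pairwise distinct entries in [n] which is a
subsequence of the word (P(x)(1),…,P(x)(n)) and satisfies P(u) = P(y): the induced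
permutation P(y) is obtained from P(x) by t unstable deletions. -/
theorem stmt_8 (q n t : ℕ) (ht : 0 < t) (htn : t < n) (hnq : n ≤ q)
    (x : Fin n → Fin q) (hx : Function.Injective x)
    (y : Fin (n - t) → Fin q) (hy : IsSubseq y x) :
    ∃ u : Fin (n - t) → Fin n, Function.Injective u ∧
      IsSubseq u ⇑(inducedPerm x) ∧ inducedPerm u = inducedPerm y := by
  obtain ⟨g, hg, hyg⟩ := hy
  -- P(x) is order-preserving on the values of x
  have hsm : StrictMono (x ∘ Tuple.sort x) :=
    (Tuple.monotone_sort x).strictMono_of_injective (hx.comp (Equiv.injective _))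
  have key : ∀ i j : Fin n, inducedPerm x i < inducedPerm x j ↔ x i < x j := by
    intro i j
    have h1 : x (Tuple.sort x (inducedPerm x i)) = x i := by
      simp [inducedPerm]
    have h2 : x (Tuple.sort x (inducedPerm x j)) = x j := by
      simp [inducedPerm]
    constructor
    · intro h
      have := hsm h
      simpa [Function.comp, h1, h2] using this
    · intro h
      by_contra hc
      rcases (not_lt.mp hc).lt_or_eq with h' | h'
      · have := hsm h'
        simp only [Function.comp, h1, h2] at this
        exact absurd this (not_lt.mpr h.le)
      · have : x i = x j := by rw [← h1, ← h2, h']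
        exact absurd this (ne_of_lt h)
  refine ⟨fun j => inducedPerm x (g j), (Equiv.injective _).comp hg.injective,
    ⟨g, hg, fun j => rfl⟩, ?_⟩
  -- comparisons of u agree with comparisons of y
  have hcmp : ∀ j k : Fin (n - t), inducedPerm x (g j) < inducedPerm x (g k) ↔ y j < y k := by
    intro j k
    rw [key, hyg, hyg]
  have hyinj : Function.Injective y := by
    intro a b hab
    apply hg.injective
    apply hx
    rw [← hyg, ← hyg, hab]
  -- show Tuple.sort u = Tuple.sort y
  have hsort : Tuple.sort y = Tuple.sort (fun j => inducedPerm x (g j)) := by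
    rw [Tuple.eq_sort_iff]
    constructor
    · intro a b hab
      rcases hab.lt_or_eq with h | h
      · have hy' := (Tuple.monotone_sort y).strictMono_of_injective
          (hyinj.comp (Equiv.injective _)) h
        exact le_of_lt ((hcmp _ _).mpr hy')
      · rw [h]
    · intro i j hij hfij
      have h1 : Tuple.sort y i = Tuple.sort y j :=
        ((Equiv.injective _).comp hg.injective) hfij
      exact absurd ((Tuple.sort y).injective h1) hij.ne
  simp only [inducedPerm] at hsort ⊢
  rw [hsort]
end

section
/- Let q, n, t be positive integers with n ≤ q. Then there exist a prime p with q < p ≤ 2q and a ∈ (ℤ/pℤ)^t such that the VT-syndrome code satisfies |C(q, n, p, t, a)| ≥ binom(q, n) / (2q)^t. -/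
/-- Hamming weight of a binary vector `x ∈ {0,1}^q`. -/
def wt {q : ℕ} (x : Fin q → Bool) : ℕ :=
  (Finset.univ.filter fun i => x i = true).card

/-- The VT-syndrome vector of `x ∈ {0,1}^q` (coordinates indexed by `1, …, q`):
its `k`-th entry is `∑_{i=1}^q i^k x_i mod p`, for `k = 1, …, t`. -/
def vts (q p t : ℕ) (x : Fin q → Bool) : Fin t → ZMod p :=
  fun k => ∑ i : Fin q, (if x i then ((((i : ℕ) + 1 : ℕ) : ZMod p) ^ ((k : ℕ) + 1)) else 0)

/-- The VT-syndrome code `C(q, n, p, t, a)`. -/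
def VTCode (q n p t : ℕ) (a : Fin t → ZMod p) : Set (Fin q → Bool) :=
  {x | wt x = n ∧ vts q p t x = a}

/-- The support of a binary vector. -/
def supp {q : ℕ} (x : Fin q → Bool) : Finset (Fin q) :=
  Finset.univ.filter fun i => x i = true

/-- A set `B` of binary vectors of weight `n` corrects `t` asymmetric errors if there is no
vector of weight `n - t` lying componentwise below two distinct elements of `B`. -/
def CorrectsAsym (q n t : ℕ) (B : Set (Fin q → Bool)) : Prop :=
  ∀ x ∈ B, ∀ y ∈ B, ∀ z : Fin q → Bool, wt z = n - t → z ≤ x → z ≤ y → x = y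

/-!
Take a Bertrand prime `q < p ≤ 2q`. The `binom(q, n)` words of weight `n` are distributed by
their syndrome among the `p^t ≤ (2q)^t` elements of `(ℤ/pℤ)^t`, so by pigeonhole some fibre, which
is the code `C(q, n, p, t, a)`, has at least `binom(q, n) / (2q)^t` elements.
-/

open Finset

lemma card_supp {q : ℕ} (x : Fin q → Bool) : #(supp x) = wt x := rfl

theorem card_filter_wt_eq_choose (q n : ℕ) :
    #{x : Fin q → Bool | wt x = n} = q.choose n := by
  have h := card_powersetCard n (univ : Finset (Fin q))
  rw [card_univ, Fintype.card_fin] at h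
  rw [← h]
  refine card_nbij' supp (fun s i => decide (i ∈ s)) ?_ ?_ ?_ ?_
  · intro x hx
    simpa [mem_powersetCard, card_supp] using hx
  · intro s hs
    rw [mem_coe, mem_powersetCard] at hs
    simp [wt, ← hs.2]
  · intro x _
    funext i
    simp [supp]
  · intro s _
    ext i
    simp [supp]

theorem exists_div_card_le_card_fiber {α β : Type*} [DecidableEq β] [Fintype β] [Nonempty β]
    (s : Finset α) (f : α → β) :
    ∃ y, (#s : ℝ) / Fintype.card β ≤ #{x ∈ s | f x = y} := by
  have hβ : (0 : ℝ) < Fintype.card β := mod_cast Fintype.card_pos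
  obtain ⟨y, -, hy⟩ := exists_le_sum_fiber_of_maps_to_of_nsmul_le_sum (s := s)
    (w := fun _ => (1 : ℝ)) (b := (#s : ℝ) / Fintype.card β) (fun x _ => mem_univ (f x))
    univ_nonempty
    (by simp [nsmul_eq_mul, mul_div_cancel₀ _ hβ.ne'])
  exact ⟨y, by simpa using hy⟩

theorem natCard_VTCode (q n p t : ℕ) (a : Fin t → ZMod p) :
    Nat.card (VTCode q n p t a) = #{x ∈ {x : Fin q → Bool | wt x = n} | vts q p t x = a} := by
  rw [← Nat.card_eq_finsetCard]
  congr
  ext x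
  simp [VTCode]

theorem stmt_10_general (q n t : ℕ) (hq : 0 < q) :
    ∃ p : ℕ, p.Prime ∧ q < p ∧ p ≤ 2 * q ∧
      ∃ a : Fin t → ZMod p,
        ((q.choose n : ℝ) / ((2 * q : ℕ) : ℝ) ^ t) ≤ (Nat.card (VTCode q n p t a) : ℝ) := by
  obtain ⟨p, hp, hqp, hp2q⟩ := Nat.exists_prime_lt_and_le_two_mul q hq.ne'
  have : NeZero p := ⟨hp.ne_zero⟩
  obtain ⟨a, ha⟩ := exists_div_card_le_card_fiber {x : Fin q → Bool | wt x = n} (vts q p t)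
  refine ⟨p, hp, hqp, hp2q, a, ?_⟩
  rw [natCard_VTCode]
  refine le_trans ?_ ha
  rw [card_filter_wt_eq_choose, Fintype.card_fun, ZMod.card, Fintype.card_fin]
  push_cast
  gcongr
  · exact pow_pos (mod_cast hp.pos) t
  · exact_mod_cast hp2q

/-- For positive q, n, t with n ≤ q, there exist a prime p with
q < p ≤ 2q and a ∈ (ℤ/pℤ)^t such that |C(q, n, p, t, a)| ≥ binom(q, n) / (2q)^t. -/
theorem stmt_10 (q n t : ℕ) (hq : 0 < q) (hn : 0 < n) (ht : 0 < t) (hnq : n ≤ q) :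
    ∃ p : ℕ, p.Prime ∧ q < p ∧ p ≤ 2 * q ∧
      ∃ a : Fin t → ZMod p,
        ((q.choose n : ℝ) / ((2 * q : ℕ) : ℝ) ^ t) ≤ (Nat.card (VTCode q n p t a) : ℝ) :=
  stmt_10_general q n t hq
end

section
/- Let p be a prime with p > q and let t ≥ 1. If x, y ∈ {0,1}^q satisfy wt(x) = wt(y) = n, vts_t(x) = vts_t(y), and there exists z ∈ {0,1}^q with z ≤ x and z ≤ y componentwise and wt(z) ≥ n − t, then x = y. In other words, for every a ∈ (ℤ/pℤ)^t the code C(q, n, p, t, a) corrects t asymmetric errors. -/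
/-! Removing the common part `z` from the supports of `x` and `y` leaves two sets `A`, `B` of
the same size `m = n - wt z ≤ t` whose images under `i ↦ i + 1` in `𝔽_p` have equal power sums
of orders `1, …, t`. Since `m < p`, Newton's identities recover the elementary symmetric
functions of these images from their power sums, hence the polynomial `∏ (X - a)` and its roots;
as `i ↦ i + 1` is injective on `Fin q` for `q < p`, this gives `A = B`. -/

theorem Multiset.mul_esymm_eq_sum {R : Type*} [CommRing R] (s : Multiset R) (k : ℕ) :
    k * s.esymm k = (-1) ^ (k + 1) *
      ∑ a ∈ Finset.HasAntidiagonal.antidiagonal k with a.1 < k,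
        (-1) ^ a.1 * s.esymm a.1 * (s.map (· ^ a.2)).sum := by
  classical
  have h := congrArg (MvPolynomial.aeval fun x : s ↦ (x : R))
    (MvPolynomial.mul_esymm_eq_sum s R k)
  simp only [map_mul, map_natCast, map_pow, map_neg, map_one, map_sum,
    MvPolynomial.aeval_esymm_eq_multiset_esymm, Multiset.map_univ_coe, MvPolynomial.psum,
    MvPolynomial.aeval_X] at h
  convert h using 7 with a
  exact congrArg Multiset.sum (Multiset.map_univ s (· ^ a.2)).symm

namespace Multiset

variable {F : Type*} [Field F] {s t : Multiset F}

theorem esymm_eq_zero_of_card_lt {R : Type*} [CommSemiring R] {s : Multiset R} {k : ℕ}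
    (hk : card s < k) : s.esymm k = 0 := by
  simp [esymm, powersetCard_eq_empty _ hk]

theorem esymm_eq_of_sum_pow_eq (hcard : card s = card t)
    (hchar : ∀ k, 0 < k → k ≤ card s → (k : F) ≠ 0)
    (hpow : ∀ k, 0 < k → k ≤ card s → (s.map (· ^ k)).sum = (t.map (· ^ k)).sum) (k : ℕ) :
    s.esymm k = t.esymm k := by
  induction k using Nat.strong_induction_on with
  | _ k ih =>
    rcases Nat.eq_zero_or_pos k with rfl | hk0
    · simp [esymm]
    rcases le_or_gt k (card s) with hks | hks
    · refine mul_left_cancel₀ (hchar k hk0 hks) ?_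
      rw [mul_esymm_eq_sum, mul_esymm_eq_sum]
      congr 1
      refine Finset.sum_congr rfl fun a ha ↦ ?_
      rw [Finset.mem_filter, Finset.HasAntidiagonal.mem_antidiagonal] at ha
      rw [ih a.1 ha.2, hpow a.2 (by omega) (by omega)]
    · rw [esymm_eq_zero_of_card_lt hks, esymm_eq_zero_of_card_lt (hcard ▸ hks)]

theorem eq_of_sum_pow_eq (hcard : card s = card t)
    (hchar : ∀ k, 0 < k → k ≤ card s → (k : F) ≠ 0)
    (hpow : ∀ k, 0 < k → k ≤ card s → (s.map (· ^ k)).sum = (t.map (· ^ k)).sum) :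
    s = t := by
  have hprod : (s.map fun a ↦ Polynomial.X - Polynomial.C a).prod =
      (t.map fun a ↦ Polynomial.X - Polynomial.C a).prod := by
    simp only [prod_X_sub_X_eq_sum_esymm, hcard, esymm_eq_of_sum_pow_eq hcard hchar hpow]
  simpa only [Polynomial.roots_multiset_prod_X_sub_C] using congrArg Polynomial.roots hprod

end Multiset

open Finset

theorem Finset.eq_of_sum_pow_eq {ι F : Type*} [Field F] {f : ι → F} (hf : Function.Injective f)
    {A B : Finset ι} (hcard : #A = #B) (hchar : ∀ k, 0 < k → k ≤ #A → (k : F) ≠ 0)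
    (hpow : ∀ k, 0 < k → k ≤ #A → ∑ i ∈ A, f i ^ k = ∑ i ∈ B, f i ^ k) :
    A = B := by
  refine Finset.val_injective (Multiset.map_injective hf ?_)
  refine Multiset.eq_of_sum_pow_eq (by simpa using hcard) (by simpa using hchar) ?_
  simpa [Multiset.map_map, Function.comp_def] using hpow

theorem Finset.eq_of_sum_pow_eq_of_subset {ι F : Type*} [Field F] [DecidableEq ι] {f : ι → F}
    (hf : Function.Injective f) {A B C : Finset ι} (hCA : C ⊆ A) (hCB : C ⊆ B) (hcard : #A = #B)
    (hchar : ∀ k, 0 < k → k ≤ #A - #C → (k : F) ≠ 0)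
    (hpow : ∀ k, 0 < k → k ≤ #A - #C → ∑ i ∈ A, f i ^ k = ∑ i ∈ B, f i ^ k) :
    A = B := by
  have hdiff : A \ C = B \ C := by
    refine Finset.eq_of_sum_pow_eq hf ?_ ?_ ?_
    · rw [card_sdiff_of_subset hCA, card_sdiff_of_subset hCB, hcard]
    · simpa only [card_sdiff_of_subset hCA] using hchar
    · intro k hk0 hkA
      rw [card_sdiff_of_subset hCA] at hkA
      have := hpow k hk0 hkA
      rw [← sum_sdiff hCA, ← sum_sdiff hCB] at this
      exact add_right_cancel this
  rw [← sdiff_union_of_subset hCA, ← sdiff_union_of_subset hCB, hdiff]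

theorem supp_subset_of_le {q : ℕ} {x z : Fin q → Bool} (h : z ≤ x) : supp z ⊆ supp x := by
  intro i hi
  simp only [supp, mem_filter, mem_univ, true_and] at hi ⊢
  exact Bool.eq_true_of_true_le (hi ▸ h i)

theorem eq_of_supp_eq {q : ℕ} {x y : Fin q → Bool} (h : supp x = supp y) : x = y := by
  funext i
  have hi := Finset.ext_iff.mp h i
  simp only [supp, mem_filter, mem_univ, true_and] at hi
  exact Bool.eq_iff_iff.mpr hi

theorem natCast_succ_injective {q p : ℕ} (hqp : q < p) :
    Function.Injective fun i : Fin q ↦ (((i : ℕ) + 1 : ℕ) : ZMod p) := by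
  intro i j hij
  have := congrArg ZMod.val hij
  simp only [ZMod.val_cast_of_lt (show (i : ℕ) + 1 < p by omega),
    ZMod.val_cast_of_lt (show (j : ℕ) + 1 < p by omega)] at this
  exact Fin.ext (by omega)

theorem sum_supp_pow_eq_of_vts_eq {q p t : ℕ} {x y : Fin q → Bool}
    (hs : vts q p t x = vts q p t y) {k : ℕ} (hk0 : 0 < k) (hkt : k ≤ t) :
    ∑ i ∈ supp x, (((i : ℕ) + 1 : ℕ) : ZMod p) ^ k =
      ∑ i ∈ supp y, (((i : ℕ) + 1 : ℕ) : ZMod p) ^ k := by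
  have := congrFun hs ⟨k - 1, by omega⟩
  simp only [vts, ← sum_filter, Nat.sub_add_cancel hk0] at this
  exact this

theorem stmt_12_general (q n t p : ℕ) (hp : p.Prime) (hpq : q < p)
    (x y : Fin q → Bool) (hx : wt x = n) (hy : wt y = n)
    (hs : vts q p t x = vts q p t y)
    (z : Fin q → Bool) (hzx : z ≤ x) (hzy : z ≤ y) (hz : n - t ≤ wt z) :
    x = y := by
  have : Fact p.Prime := ⟨hp⟩
  have hwx : #(supp x) = n := hx
  have hwy : #(supp y) = n := hy
  have hwz : #(supp z) = wt z := rfl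
  have hxq : #(supp x) ≤ q := by simpa using card_le_univ (supp x)
  refine eq_of_supp_eq (eq_of_sum_pow_eq_of_subset (natCast_succ_injective hpq)
    (supp_subset_of_le hzx) (supp_subset_of_le hzy) (hwx.trans hwy.symm) ?_ ?_)
  · intro k hk0 hk
    rw [Ne, ZMod.natCast_eq_zero_iff]
    exact Nat.not_dvd_of_pos_of_lt hk0 (by omega)
  · intro k hk0 hk
    exact sum_supp_pow_eq_of_vts_eq hs hk0 (by omega)

/-- Let p > q be prime and t ≥ 1. If x, y ∈ {0,1}^q have weight n, equal
VT-syndrome vectors, and admit a common componentwise lower bound z of weight ≥ n − t, then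
x = y; i.e. every code C(q, n, p, t, a) corrects t asymmetric errors. -/
theorem stmt_12 (q n t p : ℕ) (hp : p.Prime) (hpq : q < p) (ht : 1 ≤ t)
    (x y : Fin q → Bool) (hx : wt x = n) (hy : wt y = n)
    (hs : vts q p t x = vts q p t y)
    (z : Fin q → Bool) (hzx : z ≤ x) (hzy : z ≤ y) (hz : n - t ≤ wt z) :
    x = y :=
  stmt_12_general q n t p hp hpq x y hx hy hs z hzx hzy hz
end

section
/- Let q, n, t be positive integers with t < n ≤ q. Suppose there exists a permutation code C_SD ⊆ S_n of size M correcting t stable deletions. Then there exists a code C ⊆ M_q^n correcting t deletions with |C| ≥ M · binom(q, n) / (2q)^t. -/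
/-! ### Auxiliary polynomial lemmas -/

open Polynomial

section PolyAux

variable {K : Type*} [Field K]

/-- The "characteristic polynomial" `∏_{a ∈ E} (1 - c a · X)` of a finset through an
injection `c` into the nonzero elements of a field. -/
noncomputable def chPoly {q : ℕ} (c : Fin q → K) (E : Finset (Fin q)) : K[X] :=
  ∏ a ∈ E, (1 - C (c a) * X)

lemma chPoly_coeff_zero {q : ℕ} (c : Fin q → K) (E : Finset (Fin q)) :
    (chPoly c E).coeff 0 = 1 := by
  rw [Polynomial.coeff_zero_eq_eval_zero, chPoly, Polynomial.eval_prod]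
  simp

lemma chPoly_natDegree_le {q : ℕ} (c : Fin q → K) (E : Finset (Fin q)) :
    (chPoly c E).natDegree ≤ E.card := by
  refine (Polynomial.natDegree_prod_le _ _).trans ?_
  rw [Finset.card_eq_sum_ones]
  refine Finset.sum_le_sum fun a _ => ?_
  refine (Polynomial.natDegree_sub_le _ _).trans ?_
  simp [Polynomial.natDegree_C_mul_le]
  exact Polynomial.natDegree_C_mul_le _ _ |>.trans (by simp)

lemma chPoly_eval_eq_zero_iff {q : ℕ} {c : Fin q → K} (hc0 : ∀ a, c a ≠ 0)
    (hcinj : Function.Injective c) (E : Finset (Fin q)) (a : Fin q) :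
    (chPoly c E).eval (c a)⁻¹ = 0 ↔ a ∈ E := by
  rw [chPoly, Polynomial.eval_prod, Finset.prod_eq_zero_iff]
  constructor
  · rintro ⟨b, hb, h0⟩
    simp only [Polynomial.eval_sub, Polynomial.eval_one, Polynomial.eval_mul,
      Polynomial.eval_C, Polynomial.eval_X, sub_eq_zero] at h0
    have : c b = c a := by
      field_simp at h0
      exact (div_eq_one_iff_eq (hc0 a)).mp h0.symm
    rwa [hcinj this] at hb
  · intro ha
    exact ⟨a, ha, by simp [hc0 a]⟩

lemma chPoly_sdiff_mul {q : ℕ} (c : Fin q → K) (A B : Finset (Fin q)) :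
    chPoly c (A \ B) * chPoly c (A ∩ B) = chPoly c A := by
  rw [← Finset.sdiff_inter_self_left A B]
  exact Finset.prod_sdiff (Finset.inter_subset_left)

/-- The key lemma: two `n`-sets whose characteristic polynomials agree in degrees
`1, …, t` and which share an `(n-t)`-subset are equal. -/
lemma setcode_key {q n t : ℕ} {c : Fin q → K} (hc0 : ∀ a, c a ≠ 0)
    (hcinj : Function.Injective c) (htn : t ≤ n)
    (A B : Finset (Fin q)) (hA : A.card = n) (hB : B.card = n)
    (hsig : ∀ k, 1 ≤ k → k ≤ t → (chPoly c A).coeff k = (chPoly c B).coeff k)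
    (D : Finset (Fin q)) (hD : D.card = n - t) (hDA : D ⊆ A) (hDB : D ⊆ B) :
    A = B := by
  have hScard : n - t ≤ (A ∩ B).card := by
    rw [← hD]; exact Finset.card_le_card (Finset.subset_inter hDA hDB)
  have hcardAB : (A \ B).card ≤ t := by
    rw [← Finset.sdiff_inter_self_left A B,
      Finset.card_sdiff_of_subset Finset.inter_subset_left, hA]
    omega
  have hcardBA : (B \ A).card ≤ t := by
    rw [← Finset.sdiff_inter_self_left B A,
      Finset.card_sdiff_of_subset Finset.inter_subset_left, hB, Finset.inter_comm]
    omega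
  set g : K[X] := chPoly c (A \ B) - chPoly c (B \ A) with hg
  have hdvd1 : (X : K[X]) ^ (t + 1) ∣ chPoly c (A ∩ B) * g := by
    have : chPoly c (A ∩ B) * g = chPoly c A - chPoly c B := by
      rw [hg, mul_sub, mul_comm (chPoly c (A ∩ B)), chPoly_sdiff_mul,
        mul_comm (chPoly c (A ∩ B)), Finset.inter_comm, chPoly_sdiff_mul]
    rw [this, Polynomial.X_pow_dvd_iff]
    intro d hd
    rw [Polynomial.coeff_sub, sub_eq_zero]
    rcases Nat.eq_zero_or_pos d with h0 | h1
    · subst h0; rw [chPoly_coeff_zero, chPoly_coeff_zero]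
    · exact hsig d h1 (by omega)
  have hXndvd : ¬ (X : K[X]) ∣ chPoly c (A ∩ B) := by
    rw [Polynomial.X_dvd_iff, chPoly_coeff_zero]
    exact one_ne_zero
  have hdvd2 : (X : K[X]) ^ (t + 1) ∣ g :=
    Polynomial.prime_X.pow_dvd_of_dvd_mul_left _ hXndvd hdvd1
  have hg0 : g = 0 := by
    by_contra hne
    have := Polynomial.natDegree_le_of_dvd hdvd2 hne
    rw [Polynomial.natDegree_X_pow] at this
    have hdg : g.natDegree ≤ t := by
      refine (Polynomial.natDegree_sub_le _ _).trans (max_le ?_ ?_)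
      · exact (chPoly_natDegree_le c _).trans hcardAB
      · exact (chPoly_natDegree_le c _).trans hcardBA
    omega
  have heq : chPoly c (A \ B) = chPoly c (B \ A) := sub_eq_zero.mp hg0
  have hsub : A ⊆ B := by
    intro a haA
    by_contra haB
    have h1 : (chPoly c (A \ B)).eval (c a)⁻¹ = 0 :=
      (chPoly_eval_eq_zero_iff hc0 hcinj _ a).mpr (Finset.mem_sdiff.mpr ⟨haA, haB⟩)
    rw [heq, chPoly_eval_eq_zero_iff hc0 hcinj] at h1
    exact (Finset.mem_sdiff.mp h1).2 haA
  exact Finset.eq_of_subset_of_card_le hsub (by rw [hA, hB])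

end PolyAux

/-! ### Auxiliary tuple lemmas -/

lemma inducedSet_card {q n : ℕ} {x : Fin n → Fin q} (hx : Function.Injective x) :
    (inducedSet x).card = n := by
  rw [inducedSet, Finset.card_image_of_injective _ hx, Finset.card_univ, Fintype.card_fin]

lemma mem_inducedSet {q n : ℕ} (x : Fin n → Fin q) (i : Fin n) : x i ∈ inducedSet x :=
  Finset.mem_image.mpr ⟨i, Finset.mem_univ i, rfl⟩

lemma comp_sort_eq_orderEmbOfFin_s14 {q n : ℕ} {x : Fin n → Fin q} (hx : Function.Injective x) :
    x ∘ ⇑(Tuple.sort x) = ⇑((inducedSet x).orderEmbOfFin (inducedSet_card hx)) := by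
  refine Finset.orderEmbOfFin_unique _ (fun i => mem_inducedSet x _) ?_
  exact (Tuple.monotone_sort x).strictMono_of_injective (hx.comp (Equiv.injective _))

lemma apply_eq_orderEmb_inducedPerm {q n : ℕ} {x : Fin n → Fin q} (hx : Function.Injective x)
    (i : Fin n) :
    x i = (inducedSet x).orderEmbOfFin (inducedSet_card hx) (inducedPerm x i) := by
  conv_lhs => rw [show i = Tuple.sort x (inducedPerm x i) by simp [inducedPerm]]
  exact congrFun (comp_sort_eq_orderEmbOfFin_s14 hx) _

lemma inducedSet_comp {q n : ℕ} (A : Finset (Fin q)) (hA : A.card = n)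
    (σ : Equiv.Perm (Fin n)) :
    inducedSet (fun i => A.orderEmbOfFin hA (σ i)) = A := by
  refine Finset.eq_of_subset_of_card_le (fun a ha => ?_) ?_
  · obtain ⟨i, _, rfl⟩ := Finset.mem_image.mp ha
    exact Finset.orderEmbOfFin_mem _ _ _
  · have hinj : Function.Injective (fun i => A.orderEmbOfFin hA (σ i)) :=
      fun i j h => σ.injective ((A.orderEmbOfFin hA).injective h)
    rw [inducedSet_card hinj, hA]

lemma inducedPerm_comp {q n : ℕ} (A : Finset (Fin q)) (hA : A.card = n)
    (σ : Equiv.Perm (Fin n)) :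
    inducedPerm (fun i => A.orderEmbOfFin hA (σ i)) = σ := by
  set x : Fin n → Fin q := fun i => A.orderEmbOfFin hA (σ i) with hxdef
  have hx : Function.Injective x := fun i j h => σ.injective ((A.orderEmbOfFin hA).injective h)
  have h1 : Monotone (x ∘ ⇑(Tuple.sort x)) := Tuple.monotone_sort x
  have h2 : Monotone (x ∘ ⇑σ⁻¹) := by
    have : x ∘ ⇑σ⁻¹ = ⇑(A.orderEmbOfFin hA) := by
      funext i; simp [hxdef]
    rw [this]; exact (A.orderEmbOfFin hA).monotone
  have h3 : x ∘ ⇑(Tuple.sort x) = x ∘ ⇑σ⁻¹ := Tuple.unique_monotone h1 h2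
  have h4 : Tuple.sort x = σ⁻¹ := by
    ext i
    exact congrArg Fin.val (hx (congrFun h3 i))
  rw [inducedPerm, h4, inv_inv]

lemma orderEmbOfFin_congr {α : Type*} [LinearOrder α] {s u : Finset α} (h : s = u) {k : ℕ}
    (hs : s.card = k) (hu : u.card = k) (i : Fin k) :
    s.orderEmbOfFin hs i = u.orderEmbOfFin hu i := by subst h; rfl

theorem stmt_14 (q n t : ℕ) (ht : 0 < t) (htn : t < n) (hnq : n ≤ q)
    (M : ℕ) (CSD : Set (Equiv.Perm (Fin n))) (hM : Nat.card CSD = M)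
    (hCSD : PermCodeCorrectsStable n t CSD) :
    ∃ C : Set (Fin n → Fin q), (∀ x ∈ C, Function.Injective x) ∧
      CorrectsDeletions q n t C ∧
      ((M : ℝ) * (q.choose n : ℝ) / ((2 * q : ℕ) : ℝ) ^ t) ≤ (Nat.card C : ℝ) := by
  have hq0 : 0 < q := by omega
  obtain ⟨p, hp, hqp, hp2q⟩ := Nat.exists_prime_lt_and_le_two_mul q (by omega)
  haveI : Fact p.Prime := ⟨hp⟩
  haveI : NeZero p := ⟨hp.ne_zero⟩
  -- the embedding into nonzero elements of `ZMod p`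
  set c : Fin q → ZMod p := fun a => (((a : ℕ) + 1 : ℕ) : ZMod p) with hc
  have hval : ∀ a : Fin q, (c a).val = (a : ℕ) + 1 := by
    intro a
    rw [hc]
    exact ZMod.val_cast_of_lt (by have := a.isLt; omega)
  have hc0 : ∀ a, c a ≠ 0 := by
    intro a h
    have := hval a
    rw [h, ZMod.val_zero] at this
    omega
  have hcinj : Function.Injective c := by
    intro a b h
    have h2 := hval a
    rw [h, hval b] at h2
    exact Fin.ext (by omega)
  -- the signature map and the pigeonhole fiber
  classical
  set sig : Finset (Fin q) → (Fin t → ZMod p) :=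
    fun A k => (chPoly c A).coeff ((k : ℕ) + 1) with hsigdef
  set s : Finset (Finset (Fin q)) := Finset.powersetCard n Finset.univ with hs
  have hscard : s.card = q.choose n := by
    rw [hs, Finset.card_powersetCard, Finset.card_univ, Fintype.card_fin]
  have hsum : ∑ b ∈ (Finset.univ : Finset (Fin t → ZMod p)),
      (s.filter fun A => sig A = b).card = s.card :=
    (Finset.card_eq_sum_card_fiberwise (fun a _ => Finset.mem_univ (sig a))).symm
  have hpigeon : ∃ b : Fin t → ZMod p,
      s.card ≤ p ^ t * (s.filter fun A => sig A = b).card := by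
    have hne : (Finset.univ : Finset (Fin t → ZMod p)).Nonempty := Finset.univ_nonempty
    have hcardK : (Finset.univ : Finset (Fin t → ZMod p)).card = p ^ t := by
      rw [Finset.card_univ, Fintype.card_fun, ZMod.card, Fintype.card_fin]
    obtain ⟨b, _, hb⟩ := Finset.exists_le_of_sum_le (s := Finset.univ)
      (f := fun _ : Fin t → ZMod p => s.card)
      (g := fun b => p ^ t * (s.filter fun A => sig A = b).card) hne
      (by
        rw [Finset.sum_const, ← Finset.mul_sum, hsum, hcardK, smul_eq_mul])
    exact ⟨b, hb⟩
  obtain ⟨b, hb⟩ := hpigeon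
  set CS₀ : Finset (Finset (Fin q)) := s.filter fun A => sig A = b with hCS₀
  have hcardn : ∀ A ∈ CS₀, A.card = n := by
    intro A hA
    have := (Finset.mem_filter.mp hA).1
    rw [hs, Finset.mem_powersetCard] at this
    exact this.2
  have hCScode : ∀ A ∈ CS₀, ∀ B ∈ CS₀, ∀ D : Finset (Fin q),
      D.card = n - t → D ⊆ A → D ⊆ B → A = B := by
    intro A hA B hB D hD hDA hDB
    refine setcode_key hc0 hcinj htn.le A B (hcardn A hA) (hcardn B hB) ?_ D hD hDA hDB
    intro k hk1 hkt
    have hsigeq : sig A = sig B := by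
      rw [(Finset.mem_filter.mp hA).2, (Finset.mem_filter.mp hB).2]
    have := congrFun hsigeq ⟨k - 1, by omega⟩
    simpa [hsigdef, Nat.sub_add_cancel hk1] using this
  -- construction of the code
  set C : Set (Fin n → Fin q) :=
    {x | Function.Injective x ∧ inducedSet x ∈ CS₀ ∧ inducedPerm x ∈ CSD} with hC
  refine ⟨C, fun x hx => hx.1, ?_, ?_⟩
  · -- corrects deletions
    rintro x ⟨hxinj, hxA, hxP⟩ x' ⟨hx'inj, hx'A, hx'P⟩ y ⟨g, hg, hyg⟩ ⟨g', hg', hyg'⟩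
    have hyinj : Function.Injective y := by
      intro j1 j2 h
      rw [hyg j1, hyg j2] at h
      exact hg.injective (hxinj h)
    have hDA : inducedSet y ⊆ inducedSet x := by
      intro a ha
      obtain ⟨j, _, rfl⟩ := Finset.mem_image.mp ha
      rw [hyg j]
      exact mem_inducedSet x _
    have hDA' : inducedSet y ⊆ inducedSet x' := by
      intro a ha
      obtain ⟨j, _, rfl⟩ := Finset.mem_image.mp ha
      rw [hyg' j]
      exact mem_inducedSet x' _
    have hAeq : inducedSet x = inducedSet x' :=
      hCScode _ hxA _ hx'A (inducedSet y) (inducedSet_card hyinj) hDA hDA'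
    -- work with the common order embedding
    have hxe := apply_eq_orderEmb_inducedPerm hxinj
    have hx'e : ∀ i, x' i =
        (inducedSet x).orderEmbOfFin (inducedSet_card hxinj) (inducedPerm x' i) := by
      intro i
      rw [apply_eq_orderEmb_inducedPerm hx'inj i]
      exact (orderEmbOfFin_congr hAeq _ _ _).symm
    set e := (inducedSet x).orderEmbOfFin (inducedSet_card hxinj) with hedef
    have hPeq : inducedPerm x = inducedPerm x' := by
      refine hCSD _ hxP _ hx'P (fun j => inducedPerm x (g j))
        ⟨g, hg, fun j => rfl⟩ ⟨g', hg', fun j => ?_⟩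
      apply e.injective
      rw [← hxe, ← hx'e, ← hyg, ← hyg']
    funext i
    rw [hxe i, hx'e i, hPeq]
  · -- cardinality
    have hequiv : C ≃ ({A // A ∈ CS₀} × {σ // σ ∈ CSD}) := by
      refine
        { toFun := fun x => (⟨inducedSet x.1, x.2.2.1⟩, ⟨inducedPerm x.1, x.2.2.2⟩)
          invFun := fun Aσ =>
            ⟨fun i => (Aσ.1.1.orderEmbOfFin (hcardn _ Aσ.1.2)) (Aσ.2.1 i), ?_, ?_, ?_⟩
          left_inv := ?_
          right_inv := ?_ }
      · exact fun i j h => Aσ.2.1.injective ((Aσ.1.1.orderEmbOfFin _).injective h)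
      · rw [inducedSet_comp]; exact Aσ.1.2
      · rw [inducedPerm_comp]; exact Aσ.2.2
      · rintro ⟨x, hxinj, hxA, hxP⟩
        apply Subtype.ext
        funext i
        exact (apply_eq_orderEmb_inducedPerm hxinj i).symm
      · rintro ⟨⟨A, hA⟩, ⟨σ, hσ⟩⟩
        simp only [Prod.mk.injEq, Subtype.mk.injEq]
        exact ⟨inducedSet_comp A (hcardn A hA) σ, inducedPerm_comp A (hcardn A hA) σ⟩
    have hcardC : Nat.card C = CS₀.card * M := by
      rw [Nat.card_congr hequiv, Nat.card_prod, ← hM]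
      congr 1
      · rw [Nat.card_eq_fintype_card, Fintype.card_coe]
    -- the numeric bound
    have hchoose : q.choose n ≤ (2 * q) ^ t * CS₀.card := by
      calc q.choose n = s.card := hscard.symm
        _ ≤ p ^ t * CS₀.card := hb
        _ ≤ (2 * q) ^ t * CS₀.card := by
            exact Nat.mul_le_mul_right _ (Nat.pow_le_pow_left hp2q t)
    have hpos : (0 : ℝ) < ((2 * q : ℕ) : ℝ) ^ t := by
      have : (0 : ℝ) < ((2 * q : ℕ) : ℝ) := by exact_mod_cast Nat.pos_of_ne_zero (by omega)
      positivity
    rw [hcardC, div_le_iff₀ hpos]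
    have h1 : (q.choose n : ℝ) ≤ ((2 * q : ℕ) : ℝ) ^ t * CS₀.card := by
      exact_mod_cast hchoose
    calc (M : ℝ) * (q.choose n : ℝ)
        ≤ (M : ℝ) * (((2 * q : ℕ) : ℝ) ^ t * CS₀.card) := by
          exact mul_le_mul_of_nonneg_left h1 (Nat.cast_nonneg M)
      _ = ((CS₀.card * M : ℕ) : ℝ) * ((2 * q : ℕ) : ℝ) ^ t := by push_cast; ring
end
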